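/- Let k ≥ 1 and n ≥ 1 be integers and let M be the k×k matrix over R with rows and columns indexed by 0,…,k−1 whose (i,j) entry is S_k(n+k−1+j−i, i). Then det M = ε · ∏_{σ=1}^{n+k−1} w(k, σ), where ε = 1 if k is odd and ε = (−1)^{n−1} if k is even. -/

import Mathlib

/-!
Let `M_t` be the `k × k` matrix with entries `S_k(t + j - i, i)`, where `S_k(m, a) = 0` for
`m < 0`; the theorem concerns `M_{n+k-1}`. Splitting off the last tile gives
`S_k(m, a) = ∑_{b=1}^k S_k(m - b, a) · w(b, a + m - b + 1)`. In the last column of `M_{t+1}`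
(row `i`, `m = t + k - i`, `a = i`) the position `a + m - b + 1 = t + k - b + 1` does not depend
on `i`, so that column is the combination `∑_j w(k - j, t + j + 1) · (column j of M_t)`, while
the other columns of `M_{t+1}` are the columns `1, …, k-1` of `M_t`. Hence
`det M_{t+1} = (-1)^(k-1) w(k, t+1) det M_t`, and `M_0` is unitriangular.
-/

/-- The weighted sum `S_k(n,a)` over all compositions of `n` with parts in `{1,…,k}`,
for weights depending only on the tile length and starting position:
each composition `c = (c_1,…,c_m)` with partial sums `p_0 = 0`, `p_j = c_1 + ⋯ + c_j`
contributes `∏_{j=1}^m w(c_j, a + p_{j-1} + 1)`. -/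
def weightedSum {R : Type*} [CommRing R] (w : ℕ → ℕ → R) (k n a : ℕ) : R :=
  ∑ c ∈ Finset.univ.filter (fun c : Composition n => ∀ i ∈ c.blocks, i ≤ k),
    ∏ j ∈ Finset.range c.length,
      w (c.blocks.getD j 0) (a + c.sizeUpTo j + 1)

open Finset

theorem Matrix.det_of_cols_eq_succ_of_last_eq_sum {R : Type*} [CommRing R] {n : ℕ}
    (A B : Matrix (Fin (n + 1)) (Fin (n + 1)) R) (d : Fin (n + 1) → R)
    (hsucc : ∀ i (j : Fin n), B i j.castSucc = A i j.succ)
    (hlast : ∀ i, B i (Fin.last n) = ∑ j, d j * A i j) :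
    B.det = (-1) ^ n * d 0 * A.det := by
  set A' := A.submatrix id (finRotate (n + 1))
  have hB : B = A'.updateCol (Fin.last n) fun i => ∑ j, d (finRotate (n + 1) j) • A' i j := by
    ext i j
    induction j using Fin.lastCases with
    | last =>
      simp only [updateCol_self, A', submatrix_apply, id, smul_eq_mul, hlast]
      exact (Equiv.sum_comp (finRotate (n + 1)) fun j => d j * A i j).symm
    | cast j =>
      have hrot : finRotate (n + 1) j.castSucc = j.succ :=
        Fin.ext (coe_finRotate_of_ne_last (Fin.castSucc_lt_last j).ne)
      simp [A', hrot, hsucc]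
  rw [hB, det_updateCol_sum, det_permute', sign_finRotate, finRotate_last]
  simp [mul_assoc, mul_left_comm]

section

def tilingWeight {M : Type*} [CommMonoid M] (w : ℕ → ℕ → M) (a : ℕ) (l : List ℕ) : M :=
  ∏ j ∈ range l.length, w (l.getD j 0) (a + (l.take j).sum + 1)

theorem tilingWeight_concat {M : Type*} [CommMonoid M] (w : ℕ → ℕ → M) (a b : ℕ) (l : List ℕ) :
    tilingWeight w a (l ++ [b]) = tilingWeight w a l * w b (a + l.sum + 1) := by
  simp only [tilingWeight, List.length_append, List.length_singleton, prod_range_succ]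
  congr 1
  · refine prod_congr rfl fun j hj => ?_
    have hj : j < l.length := mem_range.mp hj
    rw [List.getD_append _ _ _ _ hj, List.take_append_of_le_length hj.le]
  · simp

variable {R : Type*} [CommRing R] (w : ℕ → ℕ → R) (k : ℕ)

def tilings (n : ℕ) : Finset (List ℕ) :=
  ({c : Composition n | ∀ i ∈ c.blocks, i ≤ k} : Finset _).image Composition.blocks

variable {k} in
theorem mem_tilings {n : ℕ} {l : List ℕ} :
    l ∈ tilings k n ↔ (∀ i ∈ l, 1 ≤ i ∧ i ≤ k) ∧ l.sum = n := by
  constructor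
  · intro h
    obtain ⟨c, hc, rfl⟩ := mem_image.mp h
    exact ⟨fun i hi => ⟨c.one_le_blocks hi, (mem_filter.mp hc).2 i hi⟩, c.blocks_sum⟩
  · rintro ⟨hl, rfl⟩
    exact mem_image.mpr
      ⟨⟨l, fun hi => (hl _ hi).1, rfl⟩, by simpa using fun i hi => (hl i hi).2, rfl⟩

theorem tilings_zero : tilings k 0 = {[]} := by
  ext l
  simp only [mem_tilings, mem_singleton]
  constructor
  · rintro ⟨hl, hsum⟩
    exact List.eq_nil_iff_forall_not_mem.mpr fun i hi =>
      (hl i hi).1.not_gt (List.sum_eq_zero_iff_forall_eq_nat.mp hsum i hi ▸ Nat.zero_lt_one)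
  · rintro rfl
    simp

theorem concat_mem_tilings {n b : ℕ} {l : List ℕ} :
    l ++ [b] ∈ tilings k n ↔ (b ∈ Icc 1 (min k n) ∧ l ∈ tilings k (n - b)) := by
  simp only [mem_tilings, List.mem_append, List.mem_singleton, List.sum_append, List.sum_singleton,
    mem_Icc, le_min_iff]
  constructor
  · rintro ⟨hl, hsum⟩
    have hb := hl b (Or.inr rfl)
    exact ⟨⟨hb.1, hb.2, by omega⟩, fun i hi => hl i (Or.inl hi), by omega⟩
  · rintro ⟨⟨hb1, hbk, hbn⟩, hl, hsum⟩
    exact ⟨fun i hi => hi.elim (hl i) (· ▸ ⟨hb1, hbk⟩), by omega⟩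

theorem exists_eq_concat_of_mem_tilings {m : ℕ} {l : List ℕ} (hl : l ∈ tilings k (m + 1)) :
    ∃ l' b, l = l' ++ [b] := by
  obtain rfl | ⟨l', b, rfl⟩ := l.eq_nil_or_concat
  · simp [mem_tilings] at hl
  · exact ⟨l', b, List.concat_eq_append ..⟩

theorem weightedSum_eq_sum_tilings (n a : ℕ) :
    weightedSum w k n a = ∑ l ∈ tilings k n, tilingWeight w a l := by
  rw [tilings, sum_image fun c _ c' _ h => Composition.ext h]
  rfl

theorem weightedSum_zero (a : ℕ) : weightedSum w k 0 a = 1 := by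
  simp [weightedSum_eq_sum_tilings, tilings_zero, tilingWeight]

theorem weightedSum_succ (m a : ℕ) :
    weightedSum w k (m + 1) a =
      ∑ b ∈ Icc 1 (min k (m + 1)), weightedSum w k (m + 1 - b) a * w b (a + (m + 1 - b) + 1) := by
  simp only [weightedSum_eq_sum_tilings, sum_mul]
  rw [sum_sigma']
  refine sum_nbij' (fun l => ⟨l.getLastD 0, l.dropLast⟩) (fun p => p.2 ++ [p.1]) ?_ ?_ ?_ ?_ ?_
  · intro l hl
    obtain ⟨l', b, rfl⟩ := exists_eq_concat_of_mem_tilings k hl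
    simpa [concat_mem_tilings] using hl
  · rintro ⟨b, l⟩ h
    simpa [concat_mem_tilings] using h
  · intro l hl
    obtain ⟨l', b, rfl⟩ := exists_eq_concat_of_mem_tilings k hl
    simp
  · rintro ⟨b, l⟩ -
    simp
  · intro l hl
    obtain ⟨l', b, rfl⟩ := exists_eq_concat_of_mem_tilings k hl
    simp only [List.getLastD_concat, List.dropLast_concat, tilingWeight_concat,
      (mem_tilings.mp ((concat_mem_tilings k).mp hl).2).2]

def extendedWeightedSum (m : ℤ) (a : ℕ) : R :=
  if 0 ≤ m then weightedSum w k m.toNat a else 0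

theorem extendedWeightedSum_natCast (m a : ℕ) :
    extendedWeightedSum w k m a = weightedSum w k m a := by
  simp [extendedWeightedSum]

theorem extendedWeightedSum_of_neg {m : ℤ} (hm : m < 0) (a : ℕ) :
    extendedWeightedSum w k m a = 0 :=
  if_neg hm.not_ge

theorem extendedWeightedSum_eq_sum {m : ℤ} (hm : 0 < m) (a : ℕ) :
    extendedWeightedSum w k m a =
      ∑ b ∈ Icc 1 k, extendedWeightedSum w k (m - b) a * w b ((a : ℤ) + m - b + 1).toNat := by
  lift m to ℕ using hm.le
  obtain ⟨m, rfl⟩ := Nat.exists_eq_add_one.mpr (by exact_mod_cast hm)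
  rw [extendedWeightedSum_natCast, weightedSum_succ]
  refine sum_subset_zero_on_sdiff (Icc_subset_Icc_right (min_le_left _ _)) (fun b hb => ?_)
    (fun b hb => ?_)
  · have hb : m + 1 < b := by simp only [mem_sdiff, mem_Icc] at hb; omega
    rw [extendedWeightedSum_of_neg _ _ (by omega), zero_mul]
  · have hb : b ≤ m + 1 := (mem_Icc.mp hb).2.trans (min_le_right _ _)
    rw [← Nat.cast_sub hb, extendedWeightedSum_natCast]
    congr 2
    omega

def weightedSumMatrix (t : ℕ) : Matrix (Fin k) (Fin k) R :=
  Matrix.of fun i j => extendedWeightedSum w k (t + j - i) i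

theorem det_weightedSumMatrix_zero : (weightedSumMatrix w k 0).det = 1 := by
  have htri : (weightedSumMatrix w k 0).IsUpperTriangular := fun i j hij =>
    extendedWeightedSum_of_neg w k (by simp at hij; omega) _
  rw [Matrix.det_of_isUpperTriangular htri]
  refine prod_eq_one fun i _ => ?_
  simp [weightedSumMatrix, extendedWeightedSum, weightedSum_zero]

theorem det_weightedSumMatrix_succ (t : ℕ) :
    (weightedSumMatrix w (k + 1) (t + 1)).det =
      (-1) ^ k * w (k + 1) (t + 1) * (weightedSumMatrix w (k + 1) t).det := by
  refine Matrix.det_of_cols_eq_succ_of_last_eq_sum _ _ (fun j => w (k + 1 - j) (t + j + 1))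
    (fun i j => ?_) (fun i => ?_)
  · simp only [weightedSumMatrix, Matrix.of_apply, Fin.val_castSucc, Fin.val_succ]
    congr 1
    push_cast
    ring
  · have hi : (i : ℕ) ≤ k := Nat.lt_succ_iff.mp i.isLt
    simp only [weightedSumMatrix, Matrix.of_apply, Fin.val_last]
    rw [extendedWeightedSum_eq_sum _ _ (by omega),
      Fin.sum_univ_eq_sum_range (fun j => w (k + 1 - j) (t + j + 1) *
        extendedWeightedSum w (k + 1) (t + j - i) i)]
    refine sum_nbij' (fun b => k + 1 - b) (fun j => k + 1 - j)
      (fun b hb => by simp only [mem_Icc, mem_range] at hb ⊢; omega)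
      (fun j hj => by simp only [mem_Icc, mem_range] at hj ⊢; omega)
      (fun b hb => by simp only [mem_Icc] at hb; omega)
      (fun j hj => by simp only [mem_range] at hj; omega) fun b hb => ?_
    simp only [mem_Icc] at hb
    rw [mul_comm, Nat.sub_sub_self hb.2, Nat.cast_sub hb.2]
    congr 2 <;> push_cast <;> omega

theorem det_weightedSumMatrix (t : ℕ) :
    (weightedSumMatrix w (k + 1) t).det = ((-1) ^ k) ^ t * ∏ σ ∈ Icc 1 t, w (k + 1) σ := by
  induction t with
  | zero => simp [det_weightedSumMatrix_zero]
  | succ t ih =>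
    rw [det_weightedSumMatrix_succ, ih, prod_Icc_succ_top (Nat.le_add_left 1 t), pow_succ]
    ring

end

/-- Let `k ≥ 1`, `n ≥ 1`, and let `M` be the `k × k` matrix over `R`
whose `(i,j)` entry is `S_k(n+k-1+j-i, i)`. Then
`det M = ε · ∏_{σ=1}^{n+k-1} w(k,σ)`, where `ε = 1` if `k` is odd and
`ε = (-1)^{n-1}` if `k` is even. -/
theorem weightedSum_toeplitz_determinant {R : Type*} [CommRing R] (w : ℕ → ℕ → R)
    (k : ℕ) (hk : 1 ≤ k) (n : ℕ) (hn : 1 ≤ n) :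
    Matrix.det (Matrix.of fun i j : Fin k =>
        weightedSum w k (n + k - 1 + (j : ℕ) - (i : ℕ)) (i : ℕ))
      = (if Odd k then 1 else (-1) ^ (n - 1)) *
          ∏ σ ∈ Finset.Icc 1 (n + k - 1), w k σ := by
  obtain ⟨k, rfl⟩ := Nat.exists_eq_add_one.mpr hk
  obtain ⟨n, rfl⟩ := Nat.exists_eq_add_one.mpr hn
  have hM : (Matrix.of fun i j : Fin (k + 1) =>
      weightedSum w (k + 1) (n + 1 + (k + 1) - 1 + (j : ℕ) - (i : ℕ)) (i : ℕ)) =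
      weightedSumMatrix w (k + 1) (n + k + 1) := by
    ext i j
    rw [weightedSumMatrix, Matrix.of_apply, Matrix.of_apply, ← extendedWeightedSum_natCast]
    congr 1
    omega
  rw [hM, det_weightedSumMatrix, show n + 1 + (k + 1) - 1 = n + k + 1 by omega]
  congr 1
  rcases Nat.even_or_odd k with hk | hk
  · simp [hk.neg_one_pow, hk]
  · rw [hk.neg_one_pow, if_neg (by simpa [Nat.odd_add_one] using hk), add_assoc, pow_add,
      hk.add_one.neg_one_pow, mul_one, Nat.add_sub_cancel]
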